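/- arXiv:2308.04072 — 2 statements merged into one kernel-verified Lean document; each statement's English description precedes it below -/
import Mathlib

section
/- Let 1 ≤ p < ∞ and n ∈ ℤ≥0. Then ‖I − K_n‖_{B(H^p)} ≥ ‖I − K_0‖_{B(H^p)}, where K_n is the n-th Fejér mean operator and K_0 f = f̂(0) (averaging operator). -/
open MeasureTheory Filter
open scoped ENNReal

noncomputable section

instance : Fact ((0:ℝ) < 2 * Real.pi) := ⟨by positivity⟩

local notation "𝕋" => AddCircle (2 * Real.pi)
local notation "μ" => (AddCircle.haarAddCircle : Measure 𝕋)


lemma fourier_pt_add {T : ℝ} [Fact (0 < T)] (n : ℤ) (x y : AddCircle T) :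
    fourier n (x + y) = fourier n x * fourier n y := by
  simp [fourier_apply, smul_add, AddCircle.toCircle_add]

lemma fourier_pt_neg {T : ℝ} [Fact (0 < T)] (n : ℤ) (y : AddCircle T) :
    fourier n (-y) = fourier (-n) y := by
  simp [fourier_apply, smul_neg, neg_smul]

lemma fourier_pt_sub {T : ℝ} [Fact (0 < T)] (n : ℤ) (x y : AddCircle T) :
    fourier n (x - y) = fourier n x * fourier (-n) y := by
  rw [sub_eq_add_neg, fourier_pt_add, fourier_pt_neg]

lemma fourier_zsmul_pt {T : ℝ} [Fact (0 < T)] (m n : ℤ) (x : AddCircle T) :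
    fourier (m * n) x = fourier n (m • x) := by
  simp [fourier_apply, mul_smul, mul_comm m n]

lemma fourier_frac_ne_one (m : ℕ) (hm : m ≠ 0) (k : ℤ) (hk : ¬ ((m:ℤ) ∣ k)) :
    fourier k (((2 * Real.pi / m : ℝ) : 𝕋)) ≠ 1 := by
  intro h
  rw [fourier_coe_apply, Complex.exp_eq_one_iff] at h
  obtain ⟨t, ht⟩ := h
  refine hk ⟨t, ?_⟩
  have hm' : (m : ℂ) ≠ 0 := Nat.cast_ne_zero.mpr hm
  have hpi : (Real.pi : ℂ) ≠ 0 := by exact_mod_cast Real.pi_ne_zero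
  have : (k : ℂ) = m * t := by
    field_simp at ht
    push_cast at ht
    field_simp at ht
    have h2 : (2 * (Real.pi:ℂ) * Complex.I * (2 * Real.pi)) * (k : ℂ)
        = (2 * (Real.pi:ℂ) * Complex.I * (2 * Real.pi)) * ((m:ℂ) * t) := by
      linear_combination (2 * (Real.pi:ℂ) * Complex.I * (2 * Real.pi)) * ht
    exact mul_left_cancel₀ (by simp [hpi, Complex.I_ne_zero]) h2
  exact_mod_cast this

lemma msmul_frac (m : ℕ) (hm : m ≠ 0) :
    ((m:ℤ) • (((2 * Real.pi / m : ℝ)) : 𝕋)) = 0 := by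
  have h1 := AddCircle.coe_zsmul (p := 2 * Real.pi) (n := (m:ℤ))
    (x := (2 * Real.pi / m : ℝ))
  rw [← h1]
  have : ((m:ℤ) • (2 * Real.pi / m : ℝ)) = 2 * Real.pi := by
    rw [zsmul_eq_mul]
    push_cast
    field_simp
  rw [this]
  exact AddCircle.coe_period (2 * Real.pi)

/-- Vanishing of the Fourier coefficients of a dilate at non-multiples. -/
lemma fourierCoeff_dilate_not_dvd (f : 𝕋 → ℂ) (m : ℕ) (hm : m ≠ 0) (k : ℤ)
    (hk : ¬ ((m:ℤ) ∣ k)) :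
    fourierCoeff (fun x : 𝕋 => f ((m:ℤ) • x)) k = 0 := by
  have ha : (m:ℤ) • (((2 * Real.pi / m : ℝ)) : 𝕋) = 0 := msmul_frac m hm
  have hfa : fourier (-k) (((2 * Real.pi / m : ℝ)) : 𝕋) ≠ 1 :=
    fourier_frac_ne_one m hm (-k) (by simpa using hk)
  have h0 : (∫ x : 𝕋, fourier (-k) (x + (((2 * Real.pi / m : ℝ)) : 𝕋)) •
        f ((m:ℤ) • (x + (((2 * Real.pi / m : ℝ)) : 𝕋))) ∂AddCircle.haarAddCircle)
      = ∫ x : 𝕋, fourier (-k) x • f ((m:ℤ) • x) ∂AddCircle.haarAddCircle :=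
    integral_add_right_eq_self (fun z : 𝕋 => fourier (-k) z • f ((m:ℤ) • z)) (((2 * Real.pi / m : ℝ)) : 𝕋)
  have key : fourierCoeff (fun x : 𝕋 => f ((m:ℤ) • x)) k
      = fourier (-k) (((2 * Real.pi / m : ℝ)) : 𝕋)
        * fourierCoeff (fun x : 𝕋 => f ((m:ℤ) • x)) k := by
    unfold fourierCoeff
    conv_lhs => rw [← h0]
    rw [← integral_const_mul]
    congr 1 with x
    have h1 : (m:ℤ) • (x + (((2 * Real.pi / m : ℝ)) : 𝕋)) = (m:ℤ) • x := by
      rw [smul_add, ha, add_zero]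
    rw [h1, fourier_pt_add, smul_eq_mul, smul_eq_mul]
    ring
  have h2 : (1 - fourier (-k) (((2 * Real.pi / m : ℝ)) : 𝕋))
      * fourierCoeff (fun x : 𝕋 => f ((m:ℤ) • x)) k = 0 := by linear_combination key
  rcases mul_eq_zero.mp h2 with h | h
  · exact absurd (by linear_combination -h) hfa
  · exact h

/-- Fourier coefficients of the dilate at multiples. -/
lemma fourierCoeff_dilate_mul (f : 𝕋 → ℂ) (hf : AEStronglyMeasurable f μ)
    (m : ℕ) (hm : m ≠ 0) (j : ℤ) :
    fourierCoeff (fun x : 𝕋 => f ((m:ℤ) • x)) ((m:ℤ) * j) = fourierCoeff f j := by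
  have hmp : MeasurePreserving (fun x : 𝕋 => (m:ℤ) • x) μ μ :=
    MeasureTheory.Measure.measurePreserving_zsmul _ (by exact_mod_cast hm)
  have hasm : AEStronglyMeasurable (fun y : 𝕋 => fourier (-j) y • f y) μ :=
    (Continuous.aestronglyMeasurable (map_continuous (fourier (-j)))).smul hf
  unfold fourierCoeff
  have h1 : ∀ x : 𝕋, fourier (-((m:ℤ) * j)) x • f ((m:ℤ) • x)
      = (fun y : 𝕋 => fourier (-j) y • f y) ((m:ℤ) • x) := by
    intro x
    have hh : -((m:ℤ) * j) = (m:ℤ) * (-j) := by ring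
    rw [hh, fourier_zsmul_pt]
  simp_rw [h1]
  calc (∫ x : 𝕋, (fun y : 𝕋 => fourier (-j) y • f y) ((m:ℤ) • x) ∂AddCircle.haarAddCircle)
      = ∫ y, fourier (-j) y • f y
          ∂(Measure.map (fun x : 𝕋 => (m:ℤ) • x) AddCircle.haarAddCircle) :=
        (MeasureTheory.integral_map hmp.aemeasurable (by rwa [hmp.map_eq])).symm
    _ = ∫ y, fourier (-j) y • f y ∂AddCircle.haarAddCircle := by rw [hmp.map_eq]

/-- Fejér convolution as a finite Fourier sum. -/
lemma fejer_conv_eq (n : ℕ) (f : 𝕋 → ℂ) (hf : Integrable f μ) (x : 𝕋) :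
    (∫ y, (∑ k ∈ Finset.Icc (-(n : ℤ)) (n : ℤ),
        ((1 - |(k : ℝ)| / (n + 1) : ℝ) : ℂ) * fourier k (x - y)) * f y ∂μ)
      = ∑ k ∈ Finset.Icc (-(n : ℤ)) (n : ℤ),
        ((1 - |(k : ℝ)| / (n + 1) : ℝ) : ℂ) * fourier k x * fourierCoeff f k := by
  have h1 : ∀ y : 𝕋, (∑ k ∈ Finset.Icc (-(n : ℤ)) (n : ℤ),
        ((1 - |(k : ℝ)| / (n + 1) : ℝ) : ℂ) * fourier k (x - y)) * f y
      = ∑ k ∈ Finset.Icc (-(n : ℤ)) (n : ℤ),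
        ((1 - |(k : ℝ)| / (n + 1) : ℝ) : ℂ) * fourier k x * (fourier (-k) y * f y) := by
    intro y
    rw [Finset.sum_mul]
    refine Finset.sum_congr rfl fun k _ => ?_
    rw [fourier_pt_sub]
    ring
  simp_rw [h1]
  rw [integral_finset_sum]
  · refine Finset.sum_congr rfl fun k _ => ?_
    rw [integral_const_mul]
    have h2 : fourierCoeff f k = ∫ y, fourier (-k) y * f y ∂AddCircle.haarAddCircle := by
      unfold fourierCoeff
      simp_rw [smul_eq_mul]
    rw [h2]
  · intro k _
    refine Integrable.const_mul ?_ _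
    exact hf.bdd_mul (Continuous.aestronglyMeasurable (map_continuous _))
      (c := 1) (Filter.Eventually.of_forall fun y => by simp [Circle.norm_coe])
/-- The `n`-th Fejér kernel `K_n(e^{iθ}) = ∑_{k=-n}^n (1 - |k|/(n+1)) e^{ikθ}` on `𝕋`. -/
def fejerKernel (n : ℕ) : 𝕋 → ℂ := fun x =>
  ∑ k ∈ Finset.Icc (-(n : ℤ)) (n : ℤ),
    ((1 - |(k : ℝ)| / (n + 1) : ℝ) : ℂ) * fourier k x

/-- The set of Rayleigh ratios `‖(I - K_n) f‖_p / ‖f‖_p` over nonzero `f ∈ H^p`, whose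
supremum is the operator norm `‖I - K_n‖_{B(H^p)}` of `I` minus the `n`-th Fejér mean. -/
def fejerHardyRatios (p : ℝ≥0∞) (n : ℕ) : Set ℝ≥0∞ :=
  {r | ∃ f : 𝕋 → ℂ, MemLp f p μ ∧ (∀ k : ℤ, k < 0 → fourierCoeff f k = 0) ∧
    eLpNorm f p μ ≠ 0 ∧
    r = eLpNorm (fun x => f x - ∫ y, fejerKernel n (x - y) * f y ∂μ) p μ /
        eLpNorm f p μ}

/-- For `1 ≤ p < ∞` and every `n`, `‖I − K_n‖_{B(H^p)} ≥ ‖I − K_0‖_{B(H^p)}`, where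
`K_n` is the `n`-th Fejér mean and `K_0 f = f̂(0)` is the averaging operator. -/
theorem norm_id_sub_fejer_ge (p : ℝ≥0∞) (hp : 1 ≤ p) (hp' : p ≠ ∞) (n : ℕ) :
    sSup (fejerHardyRatios p 0) ≤ sSup (fejerHardyRatios p n) := by
  apply sSup_le_sSup
  rintro r ⟨f, hf, hneg, hne, hr⟩
  set m : ℕ := n + 1 with hm_def
  have hm : m ≠ 0 := Nat.succ_ne_zero n
  have hm' : ((m:ℤ)) ≠ 0 := by exact_mod_cast hm
  have hmp : MeasurePreserving (fun x : 𝕋 => (m:ℤ) • x) μ μ :=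
    MeasureTheory.Measure.measurePreserving_zsmul _ hm'
  set g : 𝕋 → ℂ := fun x => f ((m:ℤ) • x) with hg_def
  have hgl : MemLp g p μ := hf.comp_measurePreserving hmp
  have hfint : Integrable f μ := hf.integrable hp
  have hgint : Integrable g μ := hgl.integrable hp
  have hgcoeff : ∀ k : ℤ, k ≠ 0 → k ∈ Finset.Icc (-(n:ℤ)) (n:ℤ) → fourierCoeff g k = 0 := by
    intro k hk0 hk
    apply fourierCoeff_dilate_not_dvd f m hm k
    intro hdvd
    have h1 : (m:ℤ) ≤ |k| := Int.le_of_dvd (abs_pos.mpr hk0) ((dvd_abs _ _).mpr hdvd)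
    rw [Finset.mem_Icc] at hk
    have h2 : |k| ≤ (n:ℤ) := abs_le.mpr ⟨hk.1, hk.2⟩
    omega
  have hg0 : fourierCoeff g 0 = fourierCoeff f 0 := by
    have h := fourierCoeff_dilate_mul f hf.aestronglyMeasurable m hm 0
    rw [hg_def]
    simpa using h
  have hgneg : ∀ k : ℤ, k < 0 → fourierCoeff g k = 0 := by
    intro k hk
    by_cases hdvd : (m:ℤ) ∣ k
    · obtain ⟨j, rfl⟩ := hdvd
      have hj : j < 0 := by
        by_contra hj
        push_neg at hj
        have : (0:ℤ) ≤ (m:ℤ) * j := mul_nonneg (by positivity) hj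
        omega
      rw [hg_def, fourierCoeff_dilate_mul f hf.aestronglyMeasurable m hm j]
      exact hneg j hj
    · exact fourierCoeff_dilate_not_dvd f m hm k hdvd
  have hKn : ∀ x : 𝕋, (∫ y, fejerKernel n (x - y) * g y ∂μ) = fourierCoeff f 0 := by
    intro x
    have h := fejer_conv_eq n g hgint x
    simp only [fejerKernel]
    rw [h, Finset.sum_eq_single 0]
    · simp [fourier_zero, hg0]
    · intro k hk hk0
      rw [hgcoeff k hk0 hk, mul_zero]
    · intro h0
      exact absurd (by simp) h0
  have hK0 : ∀ x : 𝕋, (∫ y, fejerKernel 0 (x - y) * f y ∂μ) = fourierCoeff f 0 := by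
    intro x
    have h := fejer_conv_eq 0 f hfint x
    simp only [fejerKernel]
    rw [h]
    simp [fourier_zero]
  have hnorm : eLpNorm g p μ = eLpNorm f p μ :=
    eLpNorm_comp_measurePreserving hf.aestronglyMeasurable hmp
  refine ⟨g, hgl, hgneg, by rwa [hnorm], ?_⟩
  rw [hr, hnorm]
  congr 1
  have hfun : (fun x => g x - ∫ y, fejerKernel n (x - y) * g y ∂μ)
      = (fun x : 𝕋 => f x - fourierCoeff f 0) ∘ (fun x : 𝕋 => (m:ℤ) • x) := by
    funext x
    show g x - _ = f ((m:ℤ) • x) - fourierCoeff f 0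
    rw [hKn x]
  have hfun0 : (fun x => f x - ∫ y, fejerKernel 0 (x - y) * f y ∂μ)
      = (fun x : 𝕋 => f x - fourierCoeff f 0) := by
    funext x
    rw [hK0 x]
  have hsm : AEStronglyMeasurable (fun x : 𝕋 => f x - fourierCoeff f 0)
      (AddCircle.haarAddCircle : Measure 𝕋) :=
    hf.aestronglyMeasurable.sub aestronglyMeasurable_const
  rw [hfun0, hfun, eLpNorm_comp_measurePreserving hsm hmp]
end
end

section
/- Let E be a Banach space with the BCAP with constant M(E). Then for every bounded operator A on E, the essential norm satisfies ‖A‖_e ≤ 2 M(E) ‖A‖_m, where ‖A‖_m := inf over closed finite-codimensional subspaces L of ‖A|_L‖. -/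
noncomputable section

/-- A Banach space `E` has the BCAP with constant `M` if for every `ε > 0` and every
finite set `S ⊆ E` there is a compact operator `T` with `‖I - T‖ ≤ M` and
`‖y - T y‖ < ε` for all `y ∈ S`. -/
def HasBCAPWith (E : Type*) [NormedAddCommGroup E] [NormedSpace ℝ E] (M : ℝ) : Prop :=
  ∀ ε : ℝ, 0 < ε → ∀ S : Finset E, ∃ T : E →L[ℝ] E,
    IsCompactOperator T ∧ ‖ContinuousLinearMap.id ℝ E - T‖ ≤ M ∧ ∀ y ∈ S, ‖y - T y‖ < ε

/-- The essential norm `‖A‖ₑ = inf {‖A - K‖ : K compact}` of a bounded operator. -/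
def essNorm {E : Type*} [NormedAddCommGroup E] [NormedSpace ℝ E]
    (A : E →L[ℝ] E) : ℝ :=
  sInf {r : ℝ | ∃ K : E →L[ℝ] E, IsCompactOperator K ∧ r = ‖A - K‖}

/-- The measure of noncompactness
`‖A‖ₘ = inf {‖A|_L‖ : L closed subspace, dim (E / L) < ∞}` of a bounded operator. -/
def mNorm {E : Type*} [NormedAddCommGroup E] [NormedSpace ℝ E]
    (A : E →L[ℝ] E) : ℝ :=
  sInf {r : ℝ | ∃ L : Submodule ℝ E, IsClosed (L : Set E) ∧
    FiniteDimensional ℝ (E ⧸ L) ∧ r = ‖A.comp L.subtypeL‖}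

lemma essNorm_le_norm_sub {E : Type*} [NormedAddCommGroup E] [NormedSpace ℝ E]
    (A K : E →L[ℝ] E) (hK : IsCompactOperator K) : essNorm A ≤ ‖A - K‖ := by
  apply csInf_le
  · exact ⟨0, by rintro r ⟨K', -, rfl⟩; positivity⟩
  · exact ⟨K, hK, rfl⟩

set_option maxHeartbeats 1000000 in
set_option synthInstance.maxHeartbeats 200000 in
lemma key {E : Type*} [NormedAddCommGroup E] [NormedSpace ℝ E]
    (M : ℝ) (hM : 0 < M) (hbcap : HasBCAPWith E M) (A : E →L[ℝ] E)
    (L : Submodule ℝ E) (hL : IsClosed (L : Set E)) (hfin : FiniteDimensional ℝ (E ⧸ L)) :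
    essNorm A ≤ 2 * M * ‖A.comp L.subtypeL‖ := by
  classical
  haveI := hL
  haveI := hfin
  set r := ‖A.comp L.subtypeL‖ with hr
  have hr0 : 0 ≤ r := by rw [hr]; positivity
  set C : ℝ := M * ‖A‖ + M * r + 1 with hC
  have hC0 : 0 < C := by positivity
  -- it suffices to show essNorm A ≤ 2*M*r + δ*C for all δ > 0
  have main : ∀ δ : ℝ, 0 < δ → essNorm A ≤ 2 * M * r + δ * C := by
    intro δ hδ
    -- finite net in the quotient
    haveI : ProperSpace (E ⧸ L) := FiniteDimensional.proper ℝ (E ⧸ L)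
    have h1 : TotallyBounded (L.mkQ '' Metric.closedBall 0 1) := by
      apply (isCompact_closedBall (0 : E ⧸ L) 1).totallyBounded.subset
      rintro y ⟨x, hx, rfl⟩
      simpa [Metric.mem_closedBall, dist_eq_norm] using
        (Submodule.Quotient.norm_mk_le L x).trans (by simpa [dist_eq_norm] using hx)
    obtain ⟨t, hts, htfin, hcover⟩ := h1.exists_subset (Metric.dist_mem_uniformity hδ)
    have hchoice : ∀ y ∈ t, ∃ x : E, ‖x‖ ≤ 1 ∧ L.mkQ x = y := by
      intro y hy
      obtain ⟨x, hx, rfl⟩ := hts hy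
      exact ⟨x, by simpa [dist_eq_norm] using hx, rfl⟩
    choose! f hf1 hf2 using hchoice
    -- apply BCAP to the images of the net points
    obtain ⟨T, hTc, hTnorm, hTapprox⟩ := hbcap δ hδ (htfin.toFinset.image (fun y => A (f y)))
    have hIT : ∀ z : E, ‖z - T z‖ ≤ M * ‖z‖ := by
      intro z
      calc ‖z - T z‖ = ‖(ContinuousLinearMap.id ℝ E - T) z‖ := by simp
        _ ≤ ‖ContinuousLinearMap.id ℝ E - T‖ * ‖z‖ := (ContinuousLinearMap.id ℝ E - T).le_opNorm z
        _ ≤ M * ‖z‖ := by gcongr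
    refine le_trans (essNorm_le_norm_sub A (T.comp A) (hTc.comp_clm A)) ?_
    apply ContinuousLinearMap.opNorm_le_of_unit_norm (by positivity)
    intro x hx
    -- find a net point close to x in the quotient
    have hxball : L.mkQ x ∈ L.mkQ '' Metric.closedBall 0 1 :=
      ⟨x, by simp [Metric.mem_closedBall, dist_eq_norm, hx], rfl⟩
    obtain ⟨y, hy, hdy⟩ := Set.mem_iUnion₂.mp (hcover hxball)
    have hdy' : ‖L.mkQ (x - f y) - 0‖ < δ := by
      simp only [map_sub, sub_zero]
      have : dist (L.mkQ x) (L.mkQ (f y)) < δ := by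
        rw [hf2 y hy]; exact hdy
      rwa [dist_eq_norm] at this
    rw [sub_zero] at hdy'
    -- lift to a small element m with x - f y - m ∈ L
    have hεpos : 0 < δ - ‖L.mkQ (x - f y)‖ := by linarith
    obtain ⟨m, hm_eq, hm_norm⟩ := Submodule.Quotient.norm_mk_lt (L.mkQ (x - f y)) hεpos
    have hm : ‖m‖ < δ := by linarith
    have hm_eq' : L.mkQ m = L.mkQ (x - f y) := hm_eq
    have hlmem : x - f y - m ∈ L := by
      have h0 : L.mkQ (x - f y - m) = 0 := by rw [map_sub, hm_eq', sub_self]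
      rw [← Submodule.Quotient.mk_eq_zero L]
      simpa [Submodule.mkQ_apply] using h0
    set l := x - f y - m with hl
    have hlnorm : ‖l‖ ≤ 2 + δ := by
      have h1 : ‖x - f y‖ ≤ 2 := by
        calc ‖x - f y‖ ≤ ‖x‖ + ‖f y‖ := norm_sub_le _ _
          _ ≤ 1 + 1 := by rw [hx]; gcongr; exact hf1 y hy
          _ = 2 := by norm_num
      calc ‖l‖ ≤ ‖x - f y‖ + ‖m‖ := norm_sub_le _ _
        _ ≤ 2 + δ := by linarith
    have hAl : ‖A l‖ ≤ r * ‖l‖ := by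
      have := (A.comp L.subtypeL).le_opNorm ⟨l, hlmem⟩
      simpa using this
    -- decompose
    have hdecomp : x = m + l + f y := by rw [hl]; abel
    have hTy : ‖A (f y) - T (A (f y))‖ < δ := by
      apply hTapprox
      simp only [Finset.mem_image, Set.Finite.mem_toFinset]
      exact ⟨y, hy, rfl⟩
    calc ‖(A - T.comp A) x‖ = ‖A x - T (A x)‖ := by
          simp [ContinuousLinearMap.sub_apply, ContinuousLinearMap.comp_apply]
      _ = ‖(A m - T (A m)) + (A l - T (A l)) + (A (f y) - T (A (f y)))‖ := by
          rw [hdecomp]; congr 1; simp only [map_add]; abel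
      _ ≤ ‖A m - T (A m)‖ + ‖A l - T (A l)‖ + ‖A (f y) - T (A (f y))‖ :=
          norm_add₃_le
      _ ≤ M * ‖A m‖ + M * ‖A l‖ + δ :=
          add_le_add (add_le_add (hIT _) (hIT _)) hTy.le
      _ ≤ M * (‖A‖ * ‖m‖) + M * (r * (2 + δ)) + δ := by
          gcongr
          · exact A.le_opNorm m
          · exact hAl.trans (by gcongr)
      _ ≤ M * (‖A‖ * δ) + M * (r * (2 + δ)) + δ := by gcongr
      _ = 2 * M * r + δ * C := by rw [hC]; ring
  -- conclude
  by_contra h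
  push_neg at h
  have hδ : 0 < (essNorm A - 2 * M * r) / (2 * C) := by
    apply div_pos (by linarith) (by linarith)
  have h1 := main _ hδ
  have h2 : (essNorm A - 2 * M * r) / (2 * C) * C = (essNorm A - 2 * M * r) / 2 := by
    field_simp
  rw [h2] at h1
  linarith

/-- If `E` has the BCAP with constant `M`, then for every bounded operator `A` on `E`
the essential norm satisfies `‖A‖ₑ ≤ 2 M ‖A‖ₘ`. -/
theorem essNorm_le_two_mul_bcap_mul_mNorm
    (E : Type*) [NormedAddCommGroup E] [NormedSpace ℝ E] [CompleteSpace E]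
    (M : ℝ) (hM : 0 < M) (hbcap : HasBCAPWith E M) (A : E →L[ℝ] E) :
    essNorm A ≤ 2 * M * mNorm A := by
  have h2M : (0:ℝ) < 2 * M := by linarith
  set S := {r : ℝ | ∃ L : Submodule ℝ E, IsClosed (L : Set E) ∧
    FiniteDimensional ℝ (E ⧸ L) ∧ r = ‖A.comp L.subtypeL‖} with hS
  have hne : S.Nonempty := by
    refine ⟨‖A.comp (⊤ : Submodule ℝ E).subtypeL‖, ⊤, ?_, ?_, rfl⟩
    · simp [Submodule.top_coe]
    · infer_instance
  have hle : ∀ s ∈ S, essNorm A / (2 * M) ≤ s := by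
    rintro s ⟨L, hL, hfin, rfl⟩
    rw [div_le_iff₀' h2M]
    exact key M hM hbcap A L hL hfin
  have := le_csInf hne hle
  rw [div_le_iff₀' h2M] at this
  exact this
end
end
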